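/- Let n be a natural number and let y : ℝ → ℝ be four times continuously differentiable on a neighborhood of 0, with y(0) = 1 and y'(0) = 0, and suppose x·y''(x) + 2·y'(x) − x·y(x)ⁿ = 0 for all x in that neighborhood. Then y''(0) = 1/3 and y⁗(0) = n/5. -/

import Mathlib

/-!
With `q = yⁿ`, the function `x y'' + 2 y' - x q` vanishes near `0`, hence so do its first two
derivatives, computed by Leibniz's rule for `x · g`. At `0` the first one gives
`3 y''(0) = q(0) = 1`. As `y` is only `C⁴`, the third derivative is taken only at `0`, where
`x · g` has derivative `g(0)` as soon as `g` is continuous at `0`; it gives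
`5 y⁗(0) = 3 q''(0) = 3 n y''(0)`, because `y'(0) = 0`.
-/

open Filter Topology

section Calculus

variable {𝕜 : Type*} [NontriviallyNormedField 𝕜] {F : Type*} [NormedAddCommGroup F]
  [NormedSpace 𝕜 F]

theorem ContDiffAt.iteratedDeriv_right {f : 𝕜 → F} {x : 𝕜} {n : ℕ} :
    ∀ j : ℕ, ContDiffAt 𝕜 (n + j : ℕ) f x → ContDiffAt 𝕜 n (iteratedDeriv j f) x
  | 0, h => by simpa using h
  | j + 1, h => by
    rw [iteratedDeriv_succ']
    exact ContDiffAt.iteratedDeriv_right j (h.derivWithin (by push_cast; rw [add_assoc]))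

theorem ContDiffAt.hasDerivAt_iteratedDeriv {f : 𝕜 → F} {x : 𝕜} {n j : ℕ}
    (h : ContDiffAt 𝕜 n f x) (hj : j < n) :
    HasDerivAt (iteratedDeriv j f) (iteratedDeriv (j + 1) f x) x := by
  have h' : ContDiffAt 𝕜 (1 + j : ℕ) f x := h.of_le (by exact_mod_cast (by omega : 1 + j ≤ n))
  rw [iteratedDeriv_succ]
  exact ((h'.iteratedDeriv_right j).differentiableAt one_ne_zero).hasDerivAt

theorem ContinuousAt.hasDerivAt_id_smul {g : 𝕜 → F} (hg : ContinuousAt g 0) :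
    HasDerivAt (fun x => x • g x) (g 0) 0 := by
  rw [hasDerivAt_iff_tendsto_slope]
  refine (hg.tendsto.mono_left nhdsWithin_le_nhds).congr' ?_
  filter_upwards [self_mem_nhdsWithin] with x (hx : x ≠ 0)
  rw [slope_def_module, zero_smul, sub_zero, sub_zero, smul_smul, inv_mul_cancel₀ hx, one_smul]

theorem HasDerivAt.eq_zero_of_eventuallyEq_zero {f : 𝕜 → F} {f' : F} {x : 𝕜}
    (h : HasDerivAt f f' x) (hf : f =ᶠ[𝓝 x] 0) : f' = 0 :=
  h.unique ((hasDerivAt_const x 0).congr_of_eventuallyEq hf)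

theorem Filter.EventuallyEq.deriv_eventuallyEq_zero {f f' : 𝕜 → F} {x : 𝕜}
    (hf : f =ᶠ[𝓝 x] 0) (h : ∀ᶠ z in 𝓝 x, HasDerivAt f (f' z) z) : f' =ᶠ[𝓝 x] 0 := by
  filter_upwards [hf.eventuallyEq_nhds, h] with z hz hdz using hdz.eq_zero_of_eventuallyEq_zero hz

theorem iteratedDeriv_two_pow_of_deriv_eq_zero {y : 𝕜 → 𝕜} {a : 𝕜} (n : ℕ)
    (hy : ContDiffAt 𝕜 2 y a) (ha : deriv y a = 0) :
    iteratedDeriv 2 (fun x => y x ^ n) a = n * y a ^ (n - 1) * iteratedDeriv 2 y a := by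
  have hd : deriv (fun x => y x ^ n) =ᶠ[𝓝 a] fun x => n * y x ^ (n - 1) * deriv y x := by
    filter_upwards [hy.eventually (by simp)] with x hx
    exact ((hx.differentiableAt two_ne_zero).hasDerivAt.fun_pow n).deriv
  have hy' : HasDerivAt (deriv y) (deriv (deriv y) a) a := by
    simpa [iteratedDeriv_succ] using
      (hy.hasDerivAt_iteratedDeriv (n := 2) (j := 1) one_lt_two)
  have hd' := (((hy.differentiableAt two_ne_zero).hasDerivAt.fun_pow (n - 1)).const_mul
    (n : 𝕜)).fun_mul hy'
  simp only [iteratedDeriv_succ, iteratedDeriv_zero]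
  rw [hd.deriv_eq, hd'.deriv, ha]
  ring

end Calculus

section LaneEmden

variable {𝕜 : Type*} [NontriviallyNormedField 𝕜] {f q : 𝕜 → 𝕜}

/-- The `k`-th derivative of `x f'' + 2 f' - x q`, by Leibniz's rule
`(x g)⁽ᵏ⁾ = x g⁽ᵏ⁾ + k g⁽ᵏ⁻¹⁾`; at `k = 0` the last term vanishes whatever `k - 1` means. -/
noncomputable def laneEmdenResidual (f q : 𝕜 → 𝕜) (k : ℕ) (x : 𝕜) : 𝕜 :=
  x * iteratedDeriv (k + 2) f x + (k + 2) * iteratedDeriv (k + 1) f x -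
    (x * iteratedDeriv k q x + k * iteratedDeriv (k - 1) q x)

theorem hasDerivAt_laneEmdenResidual {x : 𝕜} (k : ℕ) (hf : ContDiffAt 𝕜 (k + 3 : ℕ) f x)
    (hq : ContDiffAt 𝕜 (k + 1 : ℕ) q x) :
    HasDerivAt (laneEmdenResidual f q k) (laneEmdenResidual f q (k + 1) x) x := by
  have hf₂ := hf.hasDerivAt_iteratedDeriv (j := k + 2) (by omega)
  have hf₁ := hf.hasDerivAt_iteratedDeriv (j := k + 1) (by omega)
  have hq₀ := hq.hasDerivAt_iteratedDeriv (j := k) (by omega)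
  have hq₁ := hq.hasDerivAt_iteratedDeriv (j := k - 1) (by omega)
  refine ((((hasDerivAt_id x).mul hf₂).add (hf₁.const_mul _)).sub
    (((hasDerivAt_id x).mul hq₀).add (hq₁.const_mul _))).congr_deriv ?_
  rcases k with _ | k
  · simp only [zero_add, one_mul, id_eq, Nat.reduceAdd, Nat.cast_zero, iteratedDeriv_zero,
      iteratedDeriv_one, zero_tsub, zero_mul, add_zero, laneEmdenResidual, Nat.cast_one, tsub_self]
    ring
  · simp only [one_mul, id_eq, Nat.cast_add, Nat.cast_one, add_tsub_cancel_right,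
      laneEmdenResidual]
    ring

theorem hasDerivAt_laneEmdenResidual_zero {k : ℕ} (hk : k ≠ 0)
    (hf : ContDiffAt 𝕜 (k + 2 : ℕ) f 0) (hq : ContDiffAt 𝕜 k q 0) :
    HasDerivAt (laneEmdenResidual f q k)
      ((k + 3) * iteratedDeriv (k + 2) f 0 - (k + 1) * iteratedDeriv k q 0) 0 := by
  have hf₂ : ContinuousAt (iteratedDeriv (k + 2) f) 0 :=
    (ContDiffAt.iteratedDeriv_right (n := 0) (k + 2) (by simpa using hf)).continuousAt
  have hq₀ : ContinuousAt (iteratedDeriv k q) 0 :=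
    (ContDiffAt.iteratedDeriv_right (n := 0) k (by simpa using hq)).continuousAt
  have hf₁ := hf.hasDerivAt_iteratedDeriv (j := k + 1) (by omega)
  have hq₁ := hq.hasDerivAt_iteratedDeriv (j := k - 1) (by omega)
  refine ((hf₂.hasDerivAt_id_smul.add (hf₁.const_mul _)).sub
    (hq₀.hasDerivAt_id_smul.add (hq₁.const_mul _))).congr_deriv ?_
  rw [Nat.sub_add_cancel (Nat.one_le_iff_ne_zero.mpr hk)]
  ring

theorem iteratedDeriv_two_four_of_laneEmdenResidual_eventuallyEq_zero
    (hf : ContDiffAt 𝕜 4 f 0) (hq : ContDiffAt 𝕜 2 q 0)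
    (h : laneEmdenResidual f q 0 =ᶠ[𝓝 0] 0) :
    3 * iteratedDeriv 2 f 0 = q 0 ∧ 5 * iteratedDeriv 4 f 0 = 3 * iteratedDeriv 2 q 0 := by
  have hf₄ : ContDiffAt 𝕜 (1 + 3 : ℕ) f 0 := by simpa using hf
  have hq₂ : ContDiffAt 𝕜 (1 + 1 : ℕ) q 0 := by simpa using hq
  have h₁ : laneEmdenResidual f q 1 =ᶠ[𝓝 0] 0 := by
    have hf₃ : ContDiffAt 𝕜 (0 + 3 : ℕ) f 0 := hf.of_le (by norm_num)
    have hq₁ : ContDiffAt 𝕜 (0 + 1 : ℕ) q 0 := hq.of_le (by norm_num)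
    refine h.deriv_eventuallyEq_zero ?_
    filter_upwards [hf₃.eventually (by simp), hq₁.eventually (by simp)] with x hfx hqx
    exact hasDerivAt_laneEmdenResidual 0 hfx hqx
  have h₂ : laneEmdenResidual f q 2 =ᶠ[𝓝 0] 0 := by
    refine h₁.deriv_eventuallyEq_zero ?_
    filter_upwards [hf₄.eventually (by simp), hq₂.eventually (by simp)] with x hfx hqx
    exact hasDerivAt_laneEmdenResidual 1 hfx hqx
  constructor
  · have h₁₀ := h₁.eq_of_nhds
    simp only [laneEmdenResidual, Nat.reduceAdd, zero_mul, Nat.cast_one, zero_add,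
      iteratedDeriv_one, tsub_self, iteratedDeriv_zero, one_mul, Pi.zero_apply] at h₁₀
    linear_combination h₁₀
  · have h₃₀ :=
      (hasDerivAt_laneEmdenResidual_zero two_ne_zero hf₄ hq₂).eq_zero_of_eventuallyEq_zero h₂
    norm_num at h₃₀
    linear_combination h₃₀

end LaneEmden

theorem laneEmden_minus_derivs (n : ℕ) (y : ℝ → ℝ) (s : Set ℝ) (hs : s ∈ nhds (0 : ℝ))
    (hy : ContDiffOn ℝ 4 y s) (h0 : y 0 = 1) (h1 : deriv y 0 = 0)
    (hode : ∀ x ∈ s, x * deriv (deriv y) x + 2 * deriv y x - x * (y x) ^ n = 0) :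
    iteratedDeriv 2 y 0 = 1 / 3 ∧ iteratedDeriv 4 y 0 = n / 5 := by
  have hy₀ : ContDiffAt ℝ 4 y 0 := hy.contDiffAt hs
  have hres : laneEmdenResidual y (fun x => y x ^ n) 0 =ᶠ[𝓝 0] 0 := by
    filter_upwards [hs] with x hx
    simpa [laneEmdenResidual, iteratedDeriv_succ] using hode x hx
  obtain ⟨h₂, h₄⟩ := iteratedDeriv_two_four_of_laneEmdenResidual_eventuallyEq_zero hy₀
    ((hy₀.pow n).of_le (by norm_num)) hres
  have hq₂ := iteratedDeriv_two_pow_of_deriv_eq_zero n (hy₀.of_le (by norm_num)) h1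
  simp only [h0, one_pow, mul_one] at h₂ hq₂
  constructor
  · linarith
  · rw [hq₂] at h₄
    linear_combination h₄ / 5 + (n : ℝ) / 5 * h₂
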